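/- Fix 0 ≤ a ≤ 1, 0 ≤ c < 1 with a ≠ c, and define f(t) = ρ(a,t,c) for t ∈ [0,1]. Then f(c) = 1, f(a) = 0, f is continuous on [0,1], strictly decreasing on (0,a), and strictly increasing on (a,1). -/

import Mathlib

/-! For `t < 1` the map `xi a` has derivative `log (1 - a) - log (1 - t)`, which changes sign
exactly at `t = a`; hence `xi a` decreases strictly to its value `0` at `a` and then increases
strictly, so `xi a c > 0` for `c ≠ a` and `rho a · c = xi a · / xi a c` inherits the shape of
`xi a`. In the degenerate case `a = 1`, `rho 1 t c = (1 - t) / (1 - c)` is affine and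
decreasing. -/

noncomputable def zeta (t s : ℝ) : ℝ := s + (1 - t) * Real.log (1 - s)
noncomputable def xi (s t : ℝ) : ℝ := zeta t t - zeta t s
noncomputable def rho (a b c : ℝ) : ℝ := if a < 1 then xi a b / xi a c else (1 - b) / (1 - c)

open Real Set

lemma xi_eq (a t : ℝ) : xi a t = t - a + (1 - t) * log (1 - t) - (1 - t) * log (1 - a) := by
  simp only [xi, zeta]; ring

lemma xi_self (a : ℝ) : xi a a = 0 := sub_self _

lemma continuous_xi (a : ℝ) : Continuous (xi a) := by
  have h_mul_log : Continuous fun t : ℝ => (1 - t) * log (1 - t) :=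
    continuous_mul_log.comp (continuous_const.sub continuous_id)
  rw [funext (xi_eq a)]
  exact ((continuous_id.sub continuous_const).add h_mul_log).sub
    ((continuous_const.sub continuous_id).mul continuous_const)

lemma hasDerivAt_xi (a : ℝ) {t : ℝ} (ht : t < 1) :
    HasDerivAt (xi a) (log (1 - a) - log (1 - t)) t := by
  have h_sub : HasDerivAt (fun s : ℝ => 1 - s) (-1) t := (hasDerivAt_id t).const_sub 1
  have h_mul_log : HasDerivAt (fun s : ℝ => (1 - s) * log (1 - s)) ((log (1 - t) + 1) * -1) t :=
    (hasDerivAt_mul_log (sub_ne_zero.2 ht.ne')).comp t h_sub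
  rw [funext (xi_eq a)]
  exact ((((hasDerivAt_id t).sub_const a).add h_mul_log).sub
    (h_sub.mul_const (log (1 - a)))).congr_deriv (by ring)

lemma xi_strictAntiOn_Iic {a : ℝ} (ha : a < 1) : StrictAntiOn (xi a) (Iic a) := by
  refine strictAntiOn_of_deriv_neg (convex_Iic a) (continuous_xi a).continuousOn fun t ht => ?_
  rw [interior_Iic] at ht
  rw [(hasDerivAt_xi a (ht.trans ha)).deriv, sub_neg]
  exact log_lt_log (by linarith) (by linarith [mem_Iio.1 ht])

lemma xi_strictMonoOn_Icc (a : ℝ) : StrictMonoOn (xi a) (Icc a 1) := by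
  refine strictMonoOn_of_deriv_pos (convex_Icc a 1) (continuous_xi a).continuousOn fun t ht => ?_
  rw [interior_Icc] at ht
  rw [(hasDerivAt_xi a ht.2).deriv, sub_pos]
  exact log_lt_log (by linarith [ht.2]) (by linarith [ht.1])

lemma xi_pos {a t : ℝ} (ha : a < 1) (ht : t < 1) (hta : t ≠ a) : 0 < xi a t := by
  rw [← xi_self a]
  rcases hta.lt_or_gt with h | h
  · exact xi_strictAntiOn_Iic ha h.le self_mem_Iic h
  · exact xi_strictMonoOn_Icc a ⟨le_rfl, ha.le⟩ ⟨h.le, ht.le⟩ h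

lemma rho_of_lt_one {a : ℝ} (ha : a < 1) (b c : ℝ) : rho a b c = xi a b / xi a c := if_pos ha

lemma rho_one (b c : ℝ) : rho 1 b c = (1 - b) / (1 - c) := if_neg (lt_irrefl 1)

theorem stmt8_general (a c : ℝ) (ha1 : a ≤ 1) (hc1 : c < 1)
    (hac : a ≠ c) :
    rho a c c = 1 ∧
    rho a a c = 0 ∧
    ContinuousOn (fun t => rho a t c) (Set.Icc 0 1) ∧
    StrictAntiOn (fun t => rho a t c) (Set.Ioo 0 a) ∧
    StrictMonoOn (fun t => rho a t c) (Set.Ioo a 1) := by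
  rcases ha1.lt_or_eq with ha | rfl
  · have hK : 0 < xi a c := xi_pos ha hc1 hac.symm
    have h_div := strictMono_div_right_of_pos hK
    simp only [rho_of_lt_one ha]
    refine ⟨div_self hK.ne', by rw [xi_self, zero_div],
      ((continuous_xi a).div_const _).continuousOn,
      h_div.comp_strictAntiOn ((xi_strictAntiOn_Iic ha).mono fun t ht => ht.2.le),
      h_div.comp_strictMonoOn ((xi_strictMonoOn_Icc a).mono Ioo_subset_Icc_self)⟩
  · have h1c : 0 < 1 - c := sub_pos.2 hc1
    simp only [rho_one]
    refine ⟨div_self h1c.ne', by rw [sub_self, zero_div], by fun_prop, ?_,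
      (Ioo_self (1 : ℝ) ▸ subsingleton_empty).strictMonoOn _⟩
    exact ((strictMono_div_right_of_pos h1c).comp_strictAnti fun x y h => sub_lt_sub_left h 1)
      |>.strictAntiOn _

theorem stmt8 (a c : ℝ) (ha : 0 ≤ a) (ha1 : a ≤ 1) (hc : 0 ≤ c) (hc1 : c < 1)
    (hac : a ≠ c) :
    rho a c c = 1 ∧
    rho a a c = 0 ∧
    ContinuousOn (fun t => rho a t c) (Set.Icc 0 1) ∧
    StrictAntiOn (fun t => rho a t c) (Set.Ioo 0 a) ∧
    StrictMonoOn (fun t => rho a t c) (Set.Ioo a 1) :=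
  stmt8_general a c ha1 hc1 hac
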